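/- arXiv:2409.17153 — 2 statements merged into one kernel-verified Lean document; each statement's English description precedes it below -/
import Mathlib

section
/- Given concentric circles of radii r₂ < r₃ centered at Q, a circle of radius r₁ centered elsewhere, and angles α, β, γ ∈ [0, π/2] with (β, γ) ≠ (π/2, π/2), the circle of radius r' = (r₃² − r₂²)/(2(r₂cos β + r₃cos γ)) whose center O' satisfies |O'O₁|² = r'² + r₁² + 2r'r₁cos α and |O'Q|² = r'² + r₂² + 2r'r₂cos β intersects the circle of radius r₁ at angle α, the circle of radius r₂ at angle β, and the circle of radius r₃ at angle γ, provided such a point O' exists. -/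
open Real Metric

/-- Circles with centers `A`, `B` and radii `a`, `b` meet at angle `θ` (the
angle between the tangent lines, which is the supplement of the angle between
the radii at the common point): `|AB|² = a² + b² ± 2ab cos θ`, the sign
accounting for the angle between the radii being `θ` or its supplement. -/
def MeetsAtAngle (A B : EuclideanSpace ℝ (Fin 2)) (a b θ : ℝ) : Prop :=
  dist A B ^ 2 = a ^ 2 + b ^ 2 + 2 * a * b * Real.cos θ ∨
  dist A B ^ 2 = a ^ 2 + b ^ 2 - 2 * a * b * Real.cos θ

/-- Given concentric circles of radii `r₂ < r₃` centered at `Q`, a circle of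
radius `r₁` centered at `O₁ ≠ Q`, and angles `α, β, γ ∈ [0, π/2]` with
`(β, γ) ≠ (π/2, π/2)`, the circle of radius
`r' = (r₃² − r₂²)/(2(r₂cos β + r₃cos γ))` whose center `O'` satisfies
`|O'O₁|² = r'² + r₁² + 2r'r₁cos α` and `|O'Q|² = r'² + r₂² + 2r'r₂cos β`
intersects the circle of radius `r₁` at angle `α`, the circle of radius `r₂`
at angle `β`, and the circle of radius `r₃` at angle `γ`. -/
theorem constructed_circle_meets_at_given_angles
    (Q O₁ O' : EuclideanSpace ℝ (Fin 2)) (r₁ r₂ r₃ α β γ : ℝ)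
    (hr₁ : 0 < r₁) (hr₂ : 0 < r₂) (h₂₃ : r₂ < r₃) (hQ : O₁ ≠ Q)
    (hα : α ∈ Set.Icc 0 (π / 2)) (hβ : β ∈ Set.Icc 0 (π / 2))
    (hγ : γ ∈ Set.Icc 0 (π / 2)) (hβγ : ¬(β = π / 2 ∧ γ = π / 2))
    (r' : ℝ)
    (hr' : r' = (r₃ ^ 2 - r₂ ^ 2) / (2 * (r₂ * Real.cos β + r₃ * Real.cos γ)))
    (h₁ : dist O' O₁ ^ 2 = r' ^ 2 + r₁ ^ 2 + 2 * r' * r₁ * Real.cos α)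
    (h₂ : dist O' Q ^ 2 = r' ^ 2 + r₂ ^ 2 + 2 * r' * r₂ * Real.cos β) :
    MeetsAtAngle O' O₁ r' r₁ α ∧ MeetsAtAngle O' Q r' r₂ β ∧
      MeetsAtAngle O' Q r' r₃ γ := by
  have hcβ : 0 ≤ Real.cos β := Real.cos_nonneg_of_mem_Icc
    ⟨le_trans (by linarith [Real.pi_pos]) hβ.1, hβ.2⟩
  have hcγ : 0 ≤ Real.cos γ := Real.cos_nonneg_of_mem_Icc
    ⟨le_trans (by linarith [Real.pi_pos]) hγ.1, hγ.2⟩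
  have hr₃ : 0 < r₃ := lt_trans hr₂ h₂₃
  have hden : 0 < r₂ * Real.cos β + r₃ * Real.cos γ := by
    rcases lt_or_eq_of_le hcβ with h | h
    · positivity
    rcases lt_or_eq_of_le hcγ with h' | h'
    · positivity
    exfalso
    apply hβγ
    constructor
    · by_contra hne
      have : 0 < Real.cos β := Real.cos_pos_of_mem_Ioo
        ⟨by linarith [Real.pi_pos, hβ.1], lt_of_le_of_ne hβ.2 hne⟩
      linarith
    · by_contra hne
      have : 0 < Real.cos γ := Real.cos_pos_of_mem_Ioo
        ⟨by linarith [Real.pi_pos, hγ.1], lt_of_le_of_ne hγ.2 hne⟩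
      linarith
  have key : 2 * r' * (r₂ * Real.cos β + r₃ * Real.cos γ) = r₃ ^ 2 - r₂ ^ 2 := by
    rw [hr']
    field_simp
  refine ⟨Or.inl h₁, Or.inl h₂, Or.inr ?_⟩
  rw [h₂]
  nlinarith [key]
end

section
/- If a circle C intersects each of two disjoint circles C₁ and C₂ (each lying outside the other) at a 90-degree angle, then C passes through both points where the circle orthogonal to C₁ and C₂ centered on the radical axis meets the line of centers O₁O₂. -/
/-!
For any two points `A`, `B` the map `Y ↦ |YA|² - |YB|²` is affine. Hence the difference of
the powers of a point `Y` with respect to `C` and to `C₀` is an affine function of `Y`.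
Orthogonality of `C` to `C₁` and `C₂` gives power `r₁²`, `r₂²` of `O₁`, `O₂` with respect to `C`,
and the radical-axis condition on the centre of `C₀` gives the same powers with respect to `C₀`.
So the affine difference vanishes at `O₁` and `O₂`, hence on the whole line `O₁O₂`, and a point
of `C₀` on that line has power `0` with respect to `C`, i.e. lies on `C`.
-/

open Metric

section

variable {V P : Type*} [NormedAddCommGroup V] [InnerProductSpace ℝ V] [MetricSpace P]
  [NormedAddTorsor V P]

noncomputable def distSqSubDistSq (a b : P) : P →ᵃ[ℝ] ℝ where
  toFun p := dist p a ^ 2 - dist p b ^ 2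
  linear := (2 : ℝ) • innerₛₗ ℝ (b -ᵥ a)
  map_vadd' p v := by
    have hba : b -ᵥ a = (p -ᵥ a) - (p -ᵥ b) := (vsub_sub_vsub_cancel_left b a p).symm
    simp only [dist_eq_norm_vsub V, vadd_vsub_assoc, norm_add_sq_real, LinearMap.smul_apply,
      innerₛₗ_apply_apply, hba, inner_sub_right, smul_eq_mul, real_inner_comm v, vadd_eq_add]
    ring

theorem dist_sq_sub_dist_sq_eq_of_mem_affineSpan_pair {a b p₁ p₂ x : P} {c : ℝ}
    (h₁ : dist p₁ a ^ 2 - dist p₁ b ^ 2 = c) (h₂ : dist p₂ a ^ 2 - dist p₂ b ^ 2 = c)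
    (hx : x ∈ line[ℝ, p₁, p₂]) : dist x a ^ 2 - dist x b ^ 2 = c := by
  refine AffineMap.eqOn_affineSpan (f := distSqSubDistSq a b) (g := AffineMap.const ℝ P c) ?_ hx
  rintro y (rfl | rfl)
  exacts [h₁, h₂]

end

theorem orthogonal_circle_passes_through_limit_points_general
    (O₁ O₂ P O : EuclideanSpace ℝ (Fin 2)) (r₁ r₂ r : ℝ)
    (hPrad : dist P O₁ ^ 2 - r₁ ^ 2 = dist P O₂ ^ 2 - r₂ ^ 2)
    (hr : 0 < r)
    (horth₁ : dist O O₁ ^ 2 = r ^ 2 + r₁ ^ 2)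
    (horth₂ : dist O O₂ ^ 2 = r ^ 2 + r₂ ^ 2) :
    ∀ X : EuclideanSpace ℝ (Fin 2),
      X ∈ affineSpan ℝ ({O₁, O₂} : Set (EuclideanSpace ℝ (Fin 2))) →
      dist X P ^ 2 = dist P O₁ ^ 2 - r₁ ^ 2 →
      dist X O = r := by
  intro X hX hXP
  have hpow : dist X O ^ 2 - dist X P ^ 2 = r ^ 2 - (dist P O₁ ^ 2 - r₁ ^ 2) := by
    refine dist_sq_sub_dist_sq_eq_of_mem_affineSpan_pair ?_ ?_ hX
    · rw [dist_comm O₁ O, dist_comm O₁ P]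
      linarith
    · rw [dist_comm O₂ O, dist_comm O₂ P]
      linarith
  have hXO : dist X O ^ 2 = r ^ 2 := by linarith
  exact (pow_left_inj₀ dist_nonneg hr.le two_ne_zero).mp hXO

/-- If a circle `C` (center `O`, radius `r`) intersects each of two disjoint
circles `C₁`, `C₂` (each lying outside the other) orthogonally, then `C`
passes through both points where the circle `C₀` — centered at the point `P`
where the radical axis meets the line of centers, with radius the tangent
length from `P` — meets the line of centers `O₁O₂`. -/
theorem orthogonal_circle_passes_through_limit_points
    (O₁ O₂ P O : EuclideanSpace ℝ (Fin 2)) (r₁ r₂ r : ℝ)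
    (hr₁ : 0 < r₁) (hr₂ : 0 < r₂) (hO : O₁ ≠ O₂)
    (hsep : dist O₁ O₂ > r₁ + r₂)
    (hPline : P ∈ affineSpan ℝ ({O₁, O₂} : Set (EuclideanSpace ℝ (Fin 2))))
    (hPrad : dist P O₁ ^ 2 - r₁ ^ 2 = dist P O₂ ^ 2 - r₂ ^ 2)
    (hr : 0 < r)
    (horth₁ : dist O O₁ ^ 2 = r ^ 2 + r₁ ^ 2)
    (horth₂ : dist O O₂ ^ 2 = r ^ 2 + r₂ ^ 2) :
    ∀ X : EuclideanSpace ℝ (Fin 2),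
      X ∈ affineSpan ℝ ({O₁, O₂} : Set (EuclideanSpace ℝ (Fin 2))) →
      dist X P ^ 2 = dist P O₁ ^ 2 - r₁ ^ 2 →
      dist X O = r :=
  orthogonal_circle_passes_through_limit_points_general O₁ O₂ P O r₁ r₂ r hPrad hr horth₁ horth₂
end
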